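/- arXiv:1703.08058 — 3 statements merged into one kernel-verified Lean document; each statement's English description precedes it below -/
import Mathlib

section
/- Let n ≥ 3, let 𝒢_n be the set of simple graphs on {1,…,n}, and for G ∈ 𝒢_n let T₂(G) = Δ(G)/binom(n,3) be its triangle density. For θ ∈ ℝ define the canonical ensemble P_θ(G) = exp(θ T₂(G))/Z(θ) with Z(θ) = Σ_{G∈𝒢_n} exp(θ T₂(G)), and suppose the parameter θ* ∈ ℝ satisfies the soft constraint Σ_{G∈𝒢_n} T₂(G) P_{θ*}(G) = T₂*. Then θ* ≥ 0 if and only if T₂* ≥ 1/8. -/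
open Finset

/-- The number of triangles (3-cliques) of a simple graph. -/
noncomputable def numTriangles {n : ℕ} (G : SimpleGraph (Fin n)) : ℕ :=
  {t : Finset (Fin n) | G.IsNClique 3 t}.ncard

/-- The triangle density of a simple graph on `n` vertices. -/
noncomputable def triangleDensity {n : ℕ} (G : SimpleGraph (Fin n)) : ℝ :=
  (numTriangles G : ℝ) / (n.choose 3 : ℝ)

/-!
Toggling a single edge is an involution on graphs, so each triple of vertices spans a triangle
in exactly one eighth of all graphs and the triangle density has uniform mean `1/8`.
For any `f` with mean `m`, the tilted mean `∑ f e^{θ f} / Z` with `Z = ∑ e^{θ f}` differs from `m`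
by `Z⁻¹ ∑ (f - m) (e^{θ f} - e^{θ m})`, and since `exp` is monotone every summand has the sign
of `θ`; it is strictly negative for `θ < 0` at the complete graph, whose density is `1 ≠ 1/8`.
-/

open Real
open scoped symmDiff

lemma sub_mul_exp_sub_exp_nonneg {θ x m : ℝ} (hθ : 0 ≤ θ) :
    0 ≤ (x - m) * (exp (θ * x) - exp (θ * m)) := by
  rcases le_total m x with h | h
  · exact mul_nonneg (sub_nonneg.2 h) (sub_nonneg.2 (exp_le_exp.2 (by gcongr)))
  · exact mul_nonneg_of_nonpos_of_nonpos (sub_nonpos.2 h)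
      (sub_nonpos.2 (exp_le_exp.2 (by gcongr)))

lemma sub_mul_exp_sub_exp_neg {θ x m : ℝ} (hθ : θ < 0) (hx : x ≠ m) :
    (x - m) * (exp (θ * x) - exp (θ * m)) < 0 := by
  rcases hx.lt_or_gt with h | h
  · exact mul_neg_of_neg_of_pos (sub_neg.2 h)
      (sub_pos.2 (exp_lt_exp.2 (mul_lt_mul_of_neg_left h hθ)))
  · exact mul_neg_of_pos_of_neg (sub_pos.2 h)
      (sub_neg.2 (exp_lt_exp.2 (mul_lt_mul_of_neg_left h hθ)))

theorem nonneg_iff_le_sum_mul_exp_div {ι : Type*} [Fintype ι] {f : ι → ℝ} {m : ℝ}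
    (hmean : ∑ i, (f i - m) = 0) (hne : ∃ i, f i ≠ m) (θ : ℝ) :
    0 ≤ θ ↔ m ≤ (∑ i, f i * exp (θ * f i)) / ∑ i, exp (θ * f i) := by
  obtain ⟨i₀, hi₀⟩ := hne
  have hZ : 0 < ∑ i, exp (θ * f i) := sum_pos (fun i _ ↦ exp_pos _) ⟨i₀, mem_univ _⟩
  have hcenter : ∑ i, (f i - m) * (exp (θ * f i) - exp (θ * m))
      = ∑ i, f i * exp (θ * f i) - m * ∑ i, exp (θ * f i) := by
    calc ∑ i, (f i - m) * (exp (θ * f i) - exp (θ * m))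
        = ∑ i, (f i * exp (θ * f i) - m * exp (θ * f i))
            - (∑ i, (f i - m)) * exp (θ * m) := by
          rw [sum_mul, ← sum_sub_distrib]
          exact sum_congr rfl fun i _ ↦ by ring
      _ = _ := by rw [hmean, zero_mul, sub_zero, sum_sub_distrib, mul_sum]
  rw [le_div_iff₀ hZ, ← sub_nonneg (b := m * _), ← hcenter]
  refine ⟨fun hθ ↦ sum_nonneg fun i _ ↦ sub_mul_exp_sub_exp_nonneg hθ,
    fun hS ↦ not_lt.1 fun hθ ↦ hS.not_gt ?_⟩
  refine sum_neg' (fun i _ ↦ ?_) ⟨i₀, mem_univ _, sub_mul_exp_sub_exp_neg hθ hi₀⟩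
  rcases eq_or_ne (f i) m with h | h
  · simp [h]
  · exact (sub_mul_exp_sub_exp_neg hθ h).le

namespace SimpleGraph

variable {V : Type*}

lemma symmDiff_adj (G H : SimpleGraph V) (x y : V) :
    (G ∆ H).Adj x y ↔ (G.Adj x y ↔ ¬H.Adj x y) := by
  rw [symmDiff_def]
  simp only [sup_adj, sdiff_adj]
  tauto

lemma symmDiff_edge_adj_self (G : SimpleGraph V) {u v : V} (huv : u ≠ v) :
    (G ∆ edge u v).Adj u v ↔ ¬G.Adj u v := by
  simp [symmDiff_adj, edge_adj, huv]

lemma symmDiff_edge_adj_of_ne (G : SimpleGraph V) {u v x y : V} (h : s(x, y) ≠ s(u, v)) :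
    (G ∆ edge u v).Adj x y ↔ G.Adj x y := by
  have : ¬(edge u v).Adj x y := by
    rw [edge_adj]
    rintro ⟨⟨rfl, rfl⟩ | ⟨rfl, rfl⟩, -⟩
    exacts [h rfl, h Sym2.eq_swap]
  simp [symmDiff_adj, this]

variable [Fintype V] [DecidableEq V]

open Classical in
lemma two_mul_card_filter_adj (Q : SimpleGraph V → Prop) [DecidablePred Q] {u v : V}
    (huv : u ≠ v) (hQ : ∀ G, Q (G ∆ edge u v) ↔ Q G) :
    2 * #{G | Q G ∧ G.Adj u v} = #{G | Q G} := by
  have htoggle : #{G | Q G ∧ G.Adj u v} = #{G | Q G ∧ ¬G.Adj u v} := by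
    refine card_equiv
      (Function.Involutive.toPerm (· ∆ edge u v) (symmDiff_symmDiff_cancel_right _)) fun G ↦ ?_
    change _ ↔ G ∆ edge u v ∈ _
    simp only [mem_filter, mem_univ, true_and, hQ, symmDiff_edge_adj_self G huv, not_not]
  rw [two_mul]
  nth_rw 2 [htoggle]
  rw [← filter_filter, ← filter_filter, card_filter_add_card_filter_not]

open Classical in
lemma eight_mul_card_filter_isNClique_triple {a b c : V} (hab : a ≠ b) (hac : a ≠ c)
    (hbc : b ≠ c) :
    8 * #{G : SimpleGraph V | G.IsNClique 3 {a, b, c}} = Fintype.card (SimpleGraph V) := by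
  have hab_ac : s(a, b) ≠ s(a, c) := by simp [hbc, hab.symm]
  have hab_bc : s(a, b) ≠ s(b, c) := by simp [hab, hac]
  have hac_bc : s(a, c) ≠ s(b, c) := by simp [hab, hac]
  have h₁ := two_mul_card_filter_adj (fun _ ↦ True) hab fun _ ↦ Iff.rfl
  have h₂ := two_mul_card_filter_adj (·.Adj a b) hac fun G ↦ G.symmDiff_edge_adj_of_ne hab_ac
  have h₃ := two_mul_card_filter_adj (fun G ↦ G.Adj a b ∧ G.Adj a c) hbc fun G ↦ by
    rw [G.symmDiff_edge_adj_of_ne hab_bc, G.symmDiff_edge_adj_of_ne hac_bc]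
  simp only [true_and, filter_true, card_univ, and_assoc] at h₁ h₂ h₃
  rw [filter_congr fun G _ ↦ is3Clique_triple_iff, ← h₁, ← h₂, ← h₃]
  ring

open Classical in
lemma eight_mul_card_filter_isNClique_three {t : Finset V} (ht : #t = 3) :
    8 * #{G : SimpleGraph V | G.IsNClique 3 t} = Fintype.card (SimpleGraph V) := by
  obtain ⟨a, b, c, hab, hac, hbc, rfl⟩ := card_eq_three.1 ht
  exact eight_mul_card_filter_isNClique_triple hab hac hbc

open Classical in
lemma card_cliqueFinset_eq_sum_ite (G : SimpleGraph V) (k : ℕ) :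
    #(G.cliqueFinset k) = ∑ t ∈ powersetCard k univ, if G.IsNClique k t then 1 else 0 := by
  rw [← card_filter]
  congr 1
  ext t
  simp only [mem_cliqueFinset_iff, mem_filter, mem_powersetCard_univ]
  exact ⟨fun h ↦ ⟨h.card_eq, h⟩, And.right⟩

open Classical in
lemma eight_mul_sum_card_cliqueFinset_three :
    8 * ∑ G : SimpleGraph V, #(G.cliqueFinset 3)
      = Fintype.card (SimpleGraph V) * (Fintype.card V).choose 3 := by
  calc 8 * ∑ G : SimpleGraph V, #(G.cliqueFinset 3)
      = ∑ t ∈ powersetCard 3 univ, 8 * #{G : SimpleGraph V | G.IsNClique 3 t} := by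
        simp only [card_cliqueFinset_eq_sum_ite, card_filter, ← mul_sum]
        rw [sum_comm]
    _ = ∑ t ∈ powersetCard 3 (univ : Finset V), Fintype.card (SimpleGraph V) :=
        sum_congr rfl fun _ ht ↦
          eight_mul_card_filter_isNClique_three (mem_powersetCard_univ.1 ht)
    _ = _ := by rw [sum_const, card_powersetCard, card_univ, smul_eq_mul, mul_comm]

lemma card_cliqueFinset_top [DecidableRel (⊤ : SimpleGraph V).Adj] (k : ℕ) :
    #((⊤ : SimpleGraph V).cliqueFinset k) = (Fintype.card V).choose k := by
  rw [← card_univ, ← card_powersetCard]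
  congr 1
  ext t
  simp [mem_cliqueFinset_iff, isNClique_iff, IsClique.top]

end SimpleGraph

lemma numTriangles_eq_card_cliqueFinset {n : ℕ} (G : SimpleGraph (Fin n))
    [DecidableRel G.Adj] :
    numTriangles G = #(G.cliqueFinset 3) := by
  rw [numTriangles, ← Set.ncard_coe_finset, SimpleGraph.coe_cliqueFinset]
  rfl

open Classical in
lemma sum_triangleDensity_sub_eighth {n : ℕ} (hn : 3 ≤ n) :
    ∑ G : SimpleGraph (Fin n), (triangleDensity G - 1 / 8) = 0 := by
  have hchoose : (n.choose 3 : ℝ) ≠ 0 := by exact_mod_cast (Nat.choose_pos hn).ne'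
  have hcount : (8 : ℝ) * ∑ G : SimpleGraph (Fin n), (numTriangles G : ℝ)
      = Fintype.card (SimpleGraph (Fin n)) * n.choose 3 := by
    simpa [numTriangles_eq_card_cliqueFinset] using
      congrArg (Nat.cast : ℕ → ℝ)
        (SimpleGraph.eight_mul_sum_card_cliqueFinset_three (V := Fin n))
  rw [sum_sub_distrib, sum_const, card_univ, nsmul_eq_mul]
  simp only [triangleDensity, ← sum_div]
  field_simp
  linarith

lemma triangleDensity_top {n : ℕ} (hn : 3 ≤ n) :
    triangleDensity (⊤ : SimpleGraph (Fin n)) = 1 := by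
  have hchoose : (n.choose 3 : ℝ) ≠ 0 := by exact_mod_cast (Nat.choose_pos hn).ne'
  rw [triangleDensity, numTriangles_eq_card_cliqueFinset, SimpleGraph.card_cliqueFinset_top,
    Fintype.card_fin, div_self hchoose]

/-- Lemma 4.1 of the paper (Triangle Model): the Lagrange multiplier of the
canonical ensemble constrained on the triangle density is nonnegative
precisely when the constrained triangle density is at least 1/8. -/
theorem triangle_model_sign (n : ℕ) (hn : 3 ≤ n) (θstar Tstar : ℝ)
    (P : SimpleGraph (Fin n) → ℝ)
    (hP : ∀ G, P G = Real.exp (θstar * triangleDensity G) /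
        ∑ G' : SimpleGraph (Fin n), Real.exp (θstar * triangleDensity G'))
    (hsoft : ∑ G : SimpleGraph (Fin n), triangleDensity G * P G = Tstar) :
    0 ≤ θstar ↔ 1 / 8 ≤ Tstar := by
  have hT : Tstar =
      (∑ G : SimpleGraph (Fin n), triangleDensity G * exp (θstar * triangleDensity G))
        / ∑ G : SimpleGraph (Fin n), exp (θstar * triangleDensity G) := by
    simp only [← hsoft, hP, mul_div_assoc', sum_div]
  rw [hT]
  exact nonneg_iff_le_sum_mul_exp_div (sum_triangleDensity_sub_eighth hn)
    ⟨⊤, by rw [triangleDensity_top hn]; norm_num⟩ θstar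
end

section
/- Let I : [0,1] → ℝ be defined by I(u) = (1/2)u log u + (1/2)(1−u) log(1−u) (with 0 log 0 = 0). Let h : [0,1]² → [0,1] be measurable and symmetric (h(x,y) = h(y,x) for a.e. (x,y)), with edge density T₁ = ∫_{[0,1]²} h(x,y) dx dy and triangle density T₂ = ∫_{[0,1]³} h(x,y) h(y,z) h(z,x) dx dy dz. If T₂ ≠ T₁³, then ∫_{[0,1]²} I(h(x,y)) dx dy > I(T₁) (strict inequality). -/
/-!
`I = -binEntropy / 2` is strictly convex on `[0,1]`, so by the strict Jensen inequality either
`I(T₁) < ∫ I ∘ h` or `h` is a.e. equal to its mean `T₁` on the square. In the latter case the three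
edge maps of the cube to the square are quasi-measure-preserving, so a.e. triangle has all three
edge weights equal to `T₁`, and `T₂ = T₁³`.
-/

open MeasureTheory Measure Real Set

section TriangleDensity

variable {α : Type*} [MeasurableSpace α] (μ : Measure α) [SFinite μ]

lemma measurePreserving_rotate_triple :
    MeasurePreserving (fun w : α × α × α => (w.2.1, w.2.2, w.1))
      (μ.prod (μ.prod μ)) (μ.prod (μ.prod μ)) :=
  (measurePreserving_prodAssoc μ μ μ).comp measurePreserving_swap

lemma quasiMeasurePreserving_fst_snd_fst :
    QuasiMeasurePreserving (fun w : α × α × α => (w.1, w.2.1))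
      (μ.prod (μ.prod μ)) (μ.prod μ) :=
  quasiMeasurePreserving_fst.comp
    (measurePreserving_prodAssoc μ μ μ).symm.quasiMeasurePreserving

lemma ae_triangle_eq_pow_three_of_ae_eq_const {R : Type*} [CommMonoid R] {f : α × α → R} {c : R}
    (hf : f =ᵐ[μ.prod μ] fun _ => c) :
    ∀ᵐ w ∂μ.prod (μ.prod μ), f (w.1, w.2.1) * f (w.2.1, w.2.2) * f (w.2.2, w.1) = c ^ 3 := by
  -- each edge is the first one after a cyclic rotation of the vertices
  have hrot := (measurePreserving_rotate_triple μ).quasiMeasurePreserving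
  have h₁ := (quasiMeasurePreserving_fst_snd_fst μ).ae_eq_comp hf
  have h₂ := hrot.ae_eq_comp h₁
  have h₃ := hrot.ae_eq_comp h₂
  filter_upwards [h₁, h₂, h₃] with w e₁ e₂ e₃
  simp only [Function.comp_apply] at e₁ e₂ e₃
  rw [e₁, e₂, e₃, pow_three, mul_assoc]

end TriangleDensity

lemma ae_eq_const_or_integral_binEntropy_lt {X : Type*} [MeasurableSpace X] {μ : Measure X}
    [IsProbabilityMeasure μ] {g : X → ℝ} (hg : AEMeasurable g μ)
    (hg01 : ∀ᵐ x ∂μ, g x ∈ Icc 0 1) :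
    g =ᵐ[μ] (fun _ => ∫ x, g x ∂μ) ∨ ∫ x, binEntropy (g x) ∂μ < binEntropy (∫ x, g x ∂μ) := by
  have hbin : ∀ᵐ x ∂μ, binEntropy (g x) ∈ Icc 0 (log 2) := by
    filter_upwards [hg01] with x hx using ⟨binEntropy_nonneg hx.1 hx.2, binEntropy_le_log_two⟩
  simpa only [average_eq_integral, Function.const_def] using
    strictConcave_binEntropy.ae_eq_const_or_lt_map_average binEntropy_continuous.continuousOn
      isClosed_Icc hg01 (Integrable.of_mem_Icc 0 1 hg hg01)
      (Integrable.of_mem_Icc 0 (log 2) (binEntropy_continuous.measurable.comp_aemeasurable hg) hbin)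

theorem graphon_entropy_strict_jensen_general
    (I : ℝ → ℝ)
    (hI : ∀ u, I u = (1 / 2) * u * Real.log u +
        (1 / 2) * (1 - u) * Real.log (1 - u))
    (h : ℝ × ℝ → ℝ) (hmeas : Measurable h)
    (hrange : ∀ z ∈ Set.Icc (0 : ℝ) 1 ×ˢ Set.Icc (0 : ℝ) 1,
        h z ∈ Set.Icc (0 : ℝ) 1)
    (T₁ T₂ : ℝ)
    (hT₁ : ∫ z in Set.Icc (0 : ℝ) 1 ×ˢ Set.Icc (0 : ℝ) 1, h z = T₁)
    (hT₂ : ∫ w in Set.Icc (0 : ℝ) 1 ×ˢ (Set.Icc (0 : ℝ) 1 ×ˢ Set.Icc (0 : ℝ) 1),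
        h (w.1, w.2.1) * h (w.2.1, w.2.2) * h (w.2.2, w.1) = T₂)
    (hne : T₂ ≠ T₁ ^ 3) :
    I T₁ < ∫ z in Set.Icc (0 : ℝ) 1 ×ˢ Set.Icc (0 : ℝ) 1, I (h z) := by
  set ν := volume.restrict (Icc (0 : ℝ) 1)
  have : IsProbabilityMeasure ν := ⟨by simp [ν]⟩
  have hsquare : volume.restrict (Icc (0 : ℝ) 1 ×ˢ Icc (0 : ℝ) 1) = ν.prod ν := by
    rw [volume_eq_prod, prod_restrict]
  have hcube : volume.restrict (Icc (0 : ℝ) 1 ×ˢ (Icc (0 : ℝ) 1 ×ˢ Icc (0 : ℝ) 1))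
      = ν.prod (ν.prod ν) := by
    rw [volume_eq_prod, ← hsquare, prod_restrict]
  have hI_binEntropy : ∀ u, I u = -binEntropy u / 2 := fun u => by
    simp only [hI, binEntropy, log_inv]; ring
  have h01 : ∀ᵐ z ∂ν.prod ν, h z ∈ Icc 0 1 :=
    hsquare ▸ ae_restrict_of_forall_mem (measurableSet_Icc.prod measurableSet_Icc) hrange
  rw [hsquare] at hT₁ ⊢
  rw [hcube] at hT₂
  rcases ae_eq_const_or_integral_binEntropy_lt hmeas.aemeasurable h01 with hconst | hlt
  · refine absurd ?_ hne
    rw [← hT₂, integral_congr_ae (ae_triangle_eq_pow_three_of_ae_eq_const ν hconst), hT₁]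
    simp
  · simp only [hI_binEntropy, integral_div, integral_neg]
    rw [hT₁] at hlt
    linarith

/-- The strict inequality (eq. 5.21) in the paper's proof of case (II)(c):
if a symmetric graphon has triangle density different from the cube of its
edge density, then its entropy functional is strictly larger than `I(T₁)`. -/
theorem graphon_entropy_strict_jensen
    (I : ℝ → ℝ)
    (hI : ∀ u, I u = (1 / 2) * u * Real.log u +
        (1 / 2) * (1 - u) * Real.log (1 - u))
    (h : ℝ × ℝ → ℝ) (hmeas : Measurable h)
    (hrange : ∀ z ∈ Set.Icc (0 : ℝ) 1 ×ˢ Set.Icc (0 : ℝ) 1,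
        h z ∈ Set.Icc (0 : ℝ) 1)
    (hsymm : ∀ᵐ z ∂(volume.restrict (Set.Icc (0 : ℝ) 1 ×ˢ Set.Icc (0 : ℝ) 1)),
        h z = h (z.2, z.1))
    (T₁ T₂ : ℝ)
    (hT₁ : ∫ z in Set.Icc (0 : ℝ) 1 ×ˢ Set.Icc (0 : ℝ) 1, h z = T₁)
    (hT₂ : ∫ w in Set.Icc (0 : ℝ) 1 ×ˢ (Set.Icc (0 : ℝ) 1 ×ˢ Set.Icc (0 : ℝ) 1),
        h (w.1, w.2.1) * h (w.2.1, w.2.2) * h (w.2.2, w.1) = T₂)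
    (hne : T₂ ≠ T₁ ^ 3) :
    I T₁ < ∫ z in Set.Icc (0 : ℝ) 1 ×ˢ Set.Icc (0 : ℝ) 1, I (h z) :=
  graphon_entropy_strict_jensen_general I hI h hmeas hrange T₁ T₂ hT₁ hT₂ hne
end

section
/- Let ε ∈ (0, 1/6), set s = √(1−6ε), c = (2+s)/6 and p = 4c(1−2c)/(1−c)². Define h*_ε : [0,1]² → [0,1] by: h*_ε(x,y) = 1 if x < c < y or y < c < x; h*_ε(x,y) = p if c < x < (1+c)/2 < y or c < y < (1+c)/2 < x; and h*_ε(x,y) = 0 otherwise. Then the edge density satisfies ∫_{[0,1]²} h*_ε(x,y) dx dy = 1/2 + ε, and the triangle density satisfies ∫_{[0,1]³} h*_ε(x,y) h*_ε(y,z) h*_ε(z,x) dx dy dz = 6c²(1−2c). -/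
/-! Label each point of `[0, 1]` by the piece `[0, c)`, `{c}`, `(c, m)`, `{m}`, `(m, 1]` containing it,
where `m = (1 + c) / 2`. Then `h*_ε (x, y)` is a fixed `5 × 5` weight matrix evaluated at the labels
of `x` and `y`, and the integral over a product measure of any function of the labels is a finite sum
weighted by the lengths `c, 0, m - c, 0, 1 - m` of the pieces. Edges run between `[0, c)` and
`(c, 1]` with weight `1` and between `(c, m)` and `(m, 1]` with weight `p`; a triangle needs one
vertex in each of `[0, c)`, `(c, m)`, `(m, 1]`. So the edge density is `2c(1 - c) + p(1 - c)² / 2`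
and the triangle density `6 p c (1 - c)² / 4`. The choice of `p` makes `p (1 - c)² = 4c(1 - 2c)`,
and `s² = 1 - 6ε` says `ε = 4c - 6c² - 1/2`. -/

open MeasureTheory Set

section StepFunction

variable {α β ι κ : Type*} [Fintype ι] [Fintype κ] {r : α → ι} {s : β → κ}

lemma apply_eq_sum_indicator_mul_indicator (F : ι → κ → ℝ) (x : α) (y : β) :
    F (r x) (s y) = ∑ i, ∑ j, F i j *
      ((r ⁻¹' {i}).indicator 1 x * (s ⁻¹' {j}).indicator 1 y) := by
  classical
  simp [indicator_apply]

variable [MeasurableSpace α] [MeasurableSpace β] {μ : Measure α} {ν : Measure β}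
  [IsFiniteMeasure μ] [IsFiniteMeasure ν]

theorem integral_prod_comp_eq_sum (hr : ∀ i, MeasurableSet (r ⁻¹' {i}))
    (hs : ∀ j, MeasurableSet (s ⁻¹' {j})) (F : ι → κ → ℝ) :
    ∫ z, F (r z.1) (s z.2) ∂μ.prod ν =
      ∑ i, ∑ j, F i j * (μ.real (r ⁻¹' {i}) * ν.real (s ⁻¹' {j})) := by
  have hint : ∀ i j, Integrable (fun z : α × β =>
      F i j * ((r ⁻¹' {i}).indicator 1 z.1 * (s ⁻¹' {j}).indicator 1 z.2)) (μ.prod ν) :=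
    fun i j => (((integrable_const 1).indicator (hr i)).mul_prod
      ((integrable_const 1).indicator (hs j))).const_mul _
  simp_rw [apply_eq_sum_indicator_mul_indicator F]
  rw [integral_finsetSum _ fun i _ => integrable_finsetSum _ fun j _ => hint i j]
  refine Finset.sum_congr rfl fun i _ => ?_
  rw [integral_finsetSum _ fun j _ => hint i j]
  refine Finset.sum_congr rfl fun j _ => ?_
  rw [integral_const_mul, integral_prod_mul, integral_indicator_one (hr i),
    integral_indicator_one (hs j)]

end StepFunction

theorem integral_prod_prod_comp_eq_sum {α ι : Type*} [Fintype ι] [MeasurableSpace α]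
    {μ : Measure α} [IsFiniteMeasure μ] {r : α → ι} (hr : ∀ i, MeasurableSet (r ⁻¹' {i}))
    (F : ι → ι → ι → ℝ) :
    ∫ w, F (r w.1) (r w.2.1) (r w.2.2) ∂μ.prod (μ.prod μ) =
      ∑ i, ∑ j, ∑ k, F i j k *
        (μ.real (r ⁻¹' {i}) * (μ.real (r ⁻¹' {j}) * μ.real (r ⁻¹' {k}))) := by
  have hrr : ∀ jk : ι × ι, MeasurableSet (Prod.map r r ⁻¹' {jk}) := fun jk => by
    rw [← singleton_prod_singleton, preimage_prod_map_prod]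
    exact (hr jk.1).prod (hr jk.2)
  refine (integral_prod_comp_eq_sum hr hrr fun i jk => F i jk.1 jk.2).trans ?_
  simp only [Fintype.sum_prod_type, ← singleton_prod_singleton, preimage_prod_map_prod,
    measureReal_prod_prod]

/-- The points `c` and `m` need labels of their own: `h*_ε` vanishes on the row of `c`,
but not on the row of `m`, so neither point fits a neighbouring piece. -/
noncomputable def scallopyLabel (c m x : ℝ) : Fin 5 :=
  if x < c then 0 else if x = c then 1 else if x < m then 2 else if x = m then 3 else 4

def scallopyWeight (p : ℝ) : Fin 5 → Fin 5 → ℝ :=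
  ![![0, 0, 1, 1, 1], ![0, 0, 0, 0, 0], ![1, 0, 0, 0, p], ![1, 0, 0, 0, 0], ![1, 0, p, 0, 0]]

lemma measurable_scallopyLabel (c m : ℝ) : Measurable (scallopyLabel c m) :=
  measurable_const.ite measurableSet_Iio <| measurable_const.ite (measurableSet_singleton c) <|
    measurable_const.ite measurableSet_Iio <| measurable_const.ite (measurableSet_singleton m)
      measurable_const

lemma scallopyLabel_preimage {c m : ℝ} (hcm : c < m) (i : Fin 5) :
    scallopyLabel c m ⁻¹' {i} = ![Iio c, {c}, Ioo c m, {m}, Ioi m] i := by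
  ext x
  fin_cases i <;>
    simp only [scallopyLabel, mem_preimage, mem_singleton_iff, Fin.zero_eta, Fin.mk_one,
      Fin.reduceFinMk, Matrix.cons_val] <;> grind

lemma measureReal_scallopyLabel_preimage {c m : ℝ} (hc : 0 ≤ c) (hcm : c < m) (hm : m ≤ 1)
    (i : Fin 5) :
    (volume.restrict (Icc (0 : ℝ) 1)).real (scallopyLabel c m ⁻¹' {i}) =
      ![c, 0, m - c, 0, 1 - m] i := by
  rw [scallopyLabel_preimage hcm]
  fin_cases i <;> simp only [Fin.zero_eta, Fin.mk_one, Fin.reduceFinMk, Matrix.cons_val] <;>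
    rw [measureReal_restrict_apply (by measurability)]
  · rw [show Iio c ∩ Icc 0 1 = Ico 0 c by ext; grind]
    simp [hc]
  · rw [measureReal_def, measure_mono_null inter_subset_left (measure_singleton _),
      ENNReal.toReal_zero]
  · rw [inter_eq_left.2 (Ioo_subset_Icc_self.trans (Icc_subset_Icc hc hm))]
    simp [hcm.le]
  · rw [measureReal_def, measure_mono_null inter_subset_left (measure_singleton _),
      ENNReal.toReal_zero]
  · rw [show Ioi m ∩ Icc 0 1 = Ioc m 1 by ext; grind]
    simp [hm]

lemma scallopy_ite_eq_scallopyWeight {c m : ℝ} (hcm : c < m) (p x y : ℝ) :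
    (if (x < c ∧ c < y) ∨ (y < c ∧ c < x) then 1
      else if (c < x ∧ x < m ∧ m < y) ∨ (c < y ∧ y < m ∧ m < x) then p
      else 0) = scallopyWeight p (scallopyLabel c m x) (scallopyLabel c m y) := by
  unfold scallopyLabel
  split_ifs <;> simp only [scallopyWeight, Matrix.cons_val] <;> grind

/-- The optimiser graphon `h*_ε` of Radin–Sadun on the scallopy curve (for
`ℓ = 2`), used in the paper's proof of case (II)(d): its edge density equals
`1/2 + ε` and its triangle density equals `6c²(1−2c)`. -/
theorem scallopy_graphon_densities
    (ε : ℝ) (hε : ε ∈ Set.Ioo (0 : ℝ) (1 / 6))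
    (s c p : ℝ)
    (hs : s = Real.sqrt (1 - 6 * ε))
    (hc : c = (2 + s) / 6)
    (hp : p = 4 * c * (1 - 2 * c) / (1 - c) ^ 2)
    (h : ℝ × ℝ → ℝ)
    (hh : ∀ x y : ℝ, h (x, y) =
      if (x < c ∧ c < y) ∨ (y < c ∧ c < x) then 1
      else if (c < x ∧ x < (1 + c) / 2 ∧ (1 + c) / 2 < y) ∨
          (c < y ∧ y < (1 + c) / 2 ∧ (1 + c) / 2 < x) then p
      else 0) :
    (∫ z in Set.Icc (0 : ℝ) 1 ×ˢ Set.Icc (0 : ℝ) 1, h z = 1 / 2 + ε) ∧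
    (∫ w in Set.Icc (0 : ℝ) 1 ×ˢ (Set.Icc (0 : ℝ) 1 ×ˢ Set.Icc (0 : ℝ) 1),
        h (w.1, w.2.1) * h (w.2.1, w.2.2) * h (w.2.2, w.1)
      = 6 * c ^ 2 * (1 - 2 * c)) := by
  obtain ⟨hε0, hε6⟩ := hε
  have hs0 : 0 ≤ s := hs ▸ Real.sqrt_nonneg _
  have hs2 : s ^ 2 = 1 - 6 * ε := hs ▸ Real.sq_sqrt (by linarith)
  have hs1 : s < 1 := by nlinarith
  have hεc : ε = 4 * c - 6 * c ^ 2 - 1 / 2 := by subst hc; linear_combination hs2 / 6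
  have hpc : p * (1 - c) ^ 2 = 4 * c * (1 - 2 * c) := by
    rw [hp, div_mul_cancel₀ _ (pow_ne_zero 2 (by linarith))]
  have hcm : c < (1 + c) / 2 := by linarith
  obtain rfl : h = fun z => scallopyWeight p (scallopyLabel c ((1 + c) / 2) z.1)
      (scallopyLabel c ((1 + c) / 2) z.2) :=
    funext fun z => (hh z.1 z.2).trans (scallopy_ite_eq_scallopyWeight hcm p z.1 z.2)
  have hmeas i := measurable_scallopyLabel c ((1 + c) / 2) (measurableSet_singleton i)
  have hvol := measureReal_scallopyLabel_preimage (by linarith) hcm (by linarith)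
  simp only [Measure.volume_eq_prod, ← Measure.prod_restrict]
  refine ⟨(integral_prod_comp_eq_sum hmeas hmeas _).trans ?_,
    (integral_prod_prod_comp_eq_sum hmeas fun i j k =>
      scallopyWeight p i j * scallopyWeight p j k * scallopyWeight p k i).trans ?_⟩ <;>
  simp only [hvol, Fin.sum_univ_five, scallopyWeight, Matrix.cons_val]
  · linear_combination hpc / 2 - hεc
  · linear_combination 3 * c / 2 * hpc
end
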